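/- Let P ∈ ℝ^{n×n} be a doubly stochastic matrix with second largest singular value σ₂(P) < 1, and let u_{i,t} ∈ ℝ^d satisfy ‖u_{i,t}‖ ≤ C for all i ∈ [n], t ≥ 1 (Euclidean norm). Define z_{i,1} = 0 for all i, z_{i,t+1} = Σ_{j=1}^n P_{ji} z_{j,t} + u_{i,t}, and z̄_t = (1/n)Σ_{i=1}^n z_{i,t}. Then for every i ∈ [n] and t ≥ 1, ‖z̄_t − z_{i,t}‖ ≤ √n·C/(1 − σ₂(P)). -/

import Mathlib

/-- The singular values of a square real matrix `M`, namely the square roots of the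
eigenvalues of the Hermitian matrix `M * Mᴴ` (with multiplicity, in arbitrary order). -/
noncomputable def singVals {n : ℕ} (M : Matrix (Fin n) (Fin n) ℝ) : Fin n → ℝ :=
  fun i => Real.sqrt ((Matrix.isHermitian_mul_conjTranspose_self M).eigenvalues i)

/-- The second largest singular value (with multiplicity) of a square real matrix. -/
noncomputable def sigma2 {n : ℕ} (M : Matrix (Fin n) (Fin n) ℝ) : ℝ :=
  sSup {s : ℝ | ∃ i j : Fin n, i ≠ j ∧ s = min (singVals M i) (singVals M j)}

/-!
Writing `z_t` for the vector `(z_{i,t})_i`, the recursion reads `z_{t+1} = Pᵀ z_t + u_t`, so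
`z̄_t - z_{i,t} = ∑_{k < t-1} ∑_j (1/n - (P^k)_{ji}) u_{j,t-1-k}`. Since `P 𝟙 = Pᵀ 𝟙 = 𝟙`, the
vector `𝟙` is an eigenvector of `P Pᵀ` for the eigenvalue `1`, and `σ₂(P) < 1` forces every other
eigenvalue to be at most `σ₂(P)²`; hence `P` contracts the hyperplane `𝟙^⊥` by the factor
`σ₂(P)`. The `i`-th column of `P^k` minus `𝟙/n` is `P^k (e_i - 𝟙/n)` with `e_i - 𝟙/n ∈ 𝟙^⊥`, so its
`ℓ²` norm is at most `σ₂(P)^k`, and its `ℓ¹` norm at most `√n σ₂(P)^k`. Summing the geometric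
series gives the bound `√n C / (1 - σ₂(P))`.
-/

open Matrix

section Spectral

variable {ι : Type*} [Fintype ι]

theorem Matrix.dotProduct_sq_le (v w : ι → ℝ) : (v ⬝ᵥ w) ^ 2 ≤ (v ⬝ᵥ v) * (w ⬝ᵥ w) := by
  simpa only [dotProduct, sq] using Finset.sum_mul_sq_le_sq_mul_sq Finset.univ v w

variable [DecidableEq ι]

theorem Matrix.dotProduct_mulVec_unitary (U : unitaryGroup ι ℝ) (v w : ι → ℝ) :
    v ⬝ᵥ ((U : Matrix ι ι ℝ) *ᵥ w) = (star (U : Matrix ι ι ℝ) *ᵥ v) ⬝ᵥ w := by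
  rw [dotProduct_mulVec, star_eq_conjTranspose, conjTranspose_eq_transpose_of_trivial,
    mulVec_transpose]

theorem Matrix.dotProduct_diagonal_mulVec_le {μ x y : ι → ℝ} {l c : ℝ}
    (hy : diagonal μ *ᵥ y = l • y) (hy0 : y ≠ 0) (hxy : x ⬝ᵥ y = 0) (hcl : c < l)
    (hμ : ∀ j k, j ≠ k → min (μ j) (μ k) ≤ c) :
    x ⬝ᵥ (diagonal μ *ᵥ x) ≤ c * (x ⬝ᵥ x) := by
  simp only [dotProduct, mulVec_diagonal, Finset.mul_sum]
  refine Finset.sum_le_sum fun k _ => ?_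
  rcases le_or_gt (μ k) c with hk | hk
  · nlinarith [mul_self_nonneg (x k)]
  -- all other eigenvalues are `≤ c < l`, so `y` is supported at `k`, and `x ⊥ y` forces `x k = 0`
  have hyj : ∀ j, j ≠ k → y j = 0 := fun j hj => by
    have hμj : μ j < l := by
      rcases min_le_iff.mp (hμ j k hj) with h | h
      · exact h.trans_lt hcl
      · exact absurd h hk.not_ge
    have hyj := congrFun hy j
    simp only [mulVec_diagonal, Pi.smul_apply, smul_eq_mul] at hyj
    exact (mul_eq_zero.mp (by linarith : (μ j - l) * y j = 0)).resolve_left (by linarith)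
  have hyk : y k ≠ 0 := fun h => hy0 <| funext fun j => by
    by_cases hj : j = k
    · rw [hj, h, Pi.zero_apply]
    · exact hyj j hj
  have hxk : x k = 0 := by
    rw [dotProduct, Finset.sum_eq_single k (fun j _ hj => by rw [hyj j hj, mul_zero])
      (by simp)] at hxy
    exact (mul_eq_zero.mp hxy).resolve_right hyk
  simp [hxk]

namespace Matrix.IsHermitian

variable {A : Matrix ι ι ℝ} (hA : A.IsHermitian)

theorem star_eigenvectorUnitary_mul :
    star (hA.eigenvectorUnitary : Matrix ι ι ℝ) * A =
      diagonal hA.eigenvalues * star (hA.eigenvectorUnitary : Matrix ι ι ℝ) := by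
  have h := hA.conjStarAlgAut_star_eigenvectorUnitary
  simp only [Unitary.conjStarAlgAut_star_apply, RCLike.ofReal_real_eq_id,
    Function.id_comp] at h
  rw [← h, mul_assoc, mul_assoc]
  simp

theorem dotProduct_mulVec_le_of_mulVec_eq_smul {v w : ι → ℝ} {l c : ℝ}
    (hw : A *ᵥ w = l • w) (hw0 : w ≠ 0) (hvw : v ⬝ᵥ w = 0) (hcl : c < l)
    (hμ : ∀ j k, j ≠ k → min (hA.eigenvalues j) (hA.eigenvalues k) ≤ c) :
    v ⬝ᵥ (A *ᵥ v) ≤ c * (v ⬝ᵥ v) := by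
  set U := hA.eigenvectorUnitary
  have hUU : (U : Matrix ι ι ℝ) * star (U : Matrix ι ι ℝ) = 1 := Unitary.coe_mul_star_self U
  have hcoord : ∀ x, star (U : Matrix ι ι ℝ) *ᵥ (A *ᵥ x) =
      diagonal hA.eigenvalues *ᵥ (star (U : Matrix ι ι ℝ) *ᵥ x) := fun x => by
    rw [mulVec_mulVec, mulVec_mulVec, hA.star_eigenvectorUnitary_mul]
  have hdot : ∀ x y, x ⬝ᵥ y = (star (U : Matrix ι ι ℝ) *ᵥ x) ⬝ᵥ (star (U : Matrix ι ι ℝ) *ᵥ y) :=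
    fun x y => by rw [← dotProduct_mulVec_unitary, mulVec_mulVec, hUU, one_mulVec]
  rw [hdot v (A *ᵥ v), hdot v v, hcoord]
  refine dotProduct_diagonal_mulVec_le ?_ ?_ (by rwa [← hdot]) hcl hμ
  · rw [← hcoord, hw, mulVec_smul]
  · intro h
    apply hw0
    rw [← one_mulVec w, ← hUU, ← mulVec_mulVec, h, mulVec_zero]

end Matrix.IsHermitian

end Spectral

section Stochastic

variable {ι : Type*} [Fintype ι] {P : Matrix ι ι ℝ}

theorem mulVec_one_of_sum_row (hrow : ∀ i, ∑ j, P i j = 1) : P *ᵥ 1 = 1 :=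
  funext fun i => by simp [mulVec, dotProduct, hrow]

theorem one_vecMul_of_sum_col (hcol : ∀ j, ∑ i, P i j = 1) : 1 ᵥ* P = 1 :=
  funext fun j => by simp [vecMul, dotProduct, hcol]

theorem pow_mulVec_one_of_sum_row [DecidableEq ι] (hrow : ∀ i, ∑ j, P i j = 1) (k : ℕ) :
    P ^ k *ᵥ 1 = 1 := by
  induction k with
  | zero => rw [pow_zero, one_mulVec]
  | succ k ih => rw [pow_succ, ← mulVec_mulVec, mulVec_one_of_sum_row hrow, ih]

theorem mulVec_dotProduct_one_of_sum_col (hcol : ∀ j, ∑ i, P i j = 1) (v : ι → ℝ) :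
    (P *ᵥ v) ⬝ᵥ 1 = v ⬝ᵥ 1 := by
  rw [dotProduct_comm, dotProduct_mulVec, one_vecMul_of_sum_col hcol, dotProduct_comm]

end Stochastic

section SecondSingularValue

variable {n : ℕ} (P : Matrix (Fin n) (Fin n) ℝ)

theorem sigma2_bddAbove :
    BddAbove {s : ℝ | ∃ i j : Fin n, i ≠ j ∧ s = min (singVals P i) (singVals P j)} :=
  (Set.finite_range fun p : Fin n × Fin n => min (singVals P p.1) (singVals P p.2)).bddAbove.mono
    (by rintro _ ⟨i, j, -, rfl⟩; exact ⟨(i, j), rfl⟩)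

theorem sigma2_nonneg : 0 ≤ sigma2 P :=
  Real.sSup_nonneg fun _ ⟨_, _, _, hs⟩ => hs ▸ le_min (Real.sqrt_nonneg _) (Real.sqrt_nonneg _)

theorem min_eigenvalues_le_sigma2_sq {j k : Fin n} (hjk : j ≠ k) :
    min ((isHermitian_mul_conjTranspose_self P).eigenvalues j)
      ((isHermitian_mul_conjTranspose_self P).eigenvalues k) ≤ sigma2 P ^ 2 := by
  have hs : min (singVals P j) (singVals P k) ≤ sigma2 P :=
    le_csSup (sigma2_bddAbove P) ⟨j, k, hjk, rfl⟩
  have hsq : ∀ l, (isHermitian_mul_conjTranspose_self P).eigenvalues l = singVals P l ^ 2 :=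
    fun l => (Real.sq_sqrt (eigenvalues_self_mul_conjTranspose_nonneg P l)).symm
  rw [hsq, hsq]
  rcases min_choice (singVals P j) (singVals P k) with h | h <;> rw [h] at hs
  · exact min_le_of_left_le (pow_le_pow_left₀ (Real.sqrt_nonneg _) hs 2)
  · exact min_le_of_right_le (pow_le_pow_left₀ (Real.sqrt_nonneg _) hs 2)

variable {P} [NeZero n] (hrow : ∀ i, ∑ j, P i j = 1) (hcol : ∀ j, ∑ i, P i j = 1)
  (hσ : sigma2 P < 1)

include hrow hcol hσ

theorem transpose_mulVec_dotProduct_le {v : Fin n → ℝ} (hv : v ⬝ᵥ 1 = 0) :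
    (Pᵀ *ᵥ v) ⬝ᵥ (Pᵀ *ᵥ v) ≤ sigma2 P ^ 2 * (v ⬝ᵥ v) := by
  have hA := isHermitian_mul_conjTranspose_self P
  have hPt : Pᴴ = Pᵀ := conjTranspose_eq_transpose_of_trivial P
  have h1 : (P * Pᴴ) *ᵥ 1 = (1 : ℝ) • 1 := by
    rw [hPt, ← mulVec_mulVec, mulVec_transpose, one_vecMul_of_sum_col hcol,
      mulVec_one_of_sum_row hrow, one_smul]
  have key := hA.dotProduct_mulVec_le_of_mulVec_eq_smul h1 one_ne_zero hv
    (pow_lt_one₀ (sigma2_nonneg P) hσ two_ne_zero) fun _ _ => min_eigenvalues_le_sigma2_sq P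
  rwa [hPt, ← mulVec_mulVec, dotProduct_mulVec, ← mulVec_transpose] at key

theorem mulVec_dotProduct_le {v : Fin n → ℝ} (hv : v ⬝ᵥ 1 = 0) :
    (P *ᵥ v) ⬝ᵥ (P *ᵥ v) ≤ sigma2 P ^ 2 * (v ⬝ᵥ v) := by
  set S := (P *ᵥ v) ⬝ᵥ (P *ᵥ v)
  have hS : 0 ≤ S := Finset.sum_nonneg fun j _ => mul_self_nonneg _
  have hv2 : 0 ≤ v ⬝ᵥ v := Finset.sum_nonneg fun j _ => mul_self_nonneg _
  have hPt := transpose_mulVec_dotProduct_le hrow hcol hσ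
    (v := P *ᵥ v) (by rw [mulVec_dotProduct_one_of_sum_col hcol, hv])
  -- `S = ⟪v, PᵀP v⟫`, and Cauchy–Schwarz transfers the bound from `Pᵀ` to `P`
  have hS2 : S ^ 2 ≤ (v ⬝ᵥ v) * (sigma2 P ^ 2 * S) := by
    calc S ^ 2 = (v ⬝ᵥ (Pᵀ *ᵥ (P *ᵥ v))) ^ 2 := by rw [dotProduct_mulVec, vecMul_transpose]
      _ ≤ (v ⬝ᵥ v) * ((Pᵀ *ᵥ (P *ᵥ v)) ⬝ᵥ (Pᵀ *ᵥ (P *ᵥ v))) := dotProduct_sq_le _ _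
      _ ≤ (v ⬝ᵥ v) * (sigma2 P ^ 2 * S) := mul_le_mul_of_nonneg_left hPt hv2
  rcases hS.eq_or_lt with h | h
  · rw [← h]; positivity
  · nlinarith

theorem pow_mulVec_dotProduct_le (k : ℕ) {v : Fin n → ℝ} (hv : v ⬝ᵥ 1 = 0) :
    (P ^ k *ᵥ v) ⬝ᵥ (P ^ k *ᵥ v) ≤ (sigma2 P ^ 2) ^ k * (v ⬝ᵥ v) := by
  induction k generalizing v with
  | zero => simp
  | succ k ih =>
    rw [pow_succ, ← mulVec_mulVec, pow_succ, mul_assoc]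
    exact (ih (by rw [mulVec_dotProduct_one_of_sum_col hcol, hv])).trans
      (mul_le_mul_of_nonneg_left (mulVec_dotProduct_le hrow hcol hσ hv) (by positivity))

theorem sum_abs_pow_apply_sub_inv_le (i : Fin n) (k : ℕ) :
    ∑ j, |(P ^ k) j i - (n : ℝ)⁻¹| ≤ Real.sqrt n * sigma2 P ^ k := by
  set w : Fin n → ℝ := Pi.single i 1 - (n : ℝ)⁻¹ • 1
  have hw1 : w ⬝ᵥ 1 = 0 := by simp [w, dotProduct_one]
  have hww : w ⬝ᵥ w ≤ 1 := by
    rw [dotProduct_sub w, dotProduct_smul, hw1, dotProduct_single]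
    simp [w]
  have hPw : P ^ k *ᵥ w = fun j => (P ^ k) j i - (n : ℝ)⁻¹ := by
    rw [mulVec_sub, mulVec_single_one, mulVec_smul, pow_mulVec_one_of_sum_row hrow]
    funext j
    simp
  have hsq : (∑ j, |(P ^ k) j i - (n : ℝ)⁻¹|) ^ 2 ≤ (Real.sqrt n * sigma2 P ^ k) ^ 2 := by
    calc (∑ j, |(P ^ k) j i - (n : ℝ)⁻¹|) ^ 2
        ≤ n * ((P ^ k *ᵥ w) ⬝ᵥ (P ^ k *ᵥ w)) := by
          simpa [hPw, dotProduct, sq] using sq_sum_le_card_mul_sum_sq (s := Finset.univ)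
            (f := fun j => |(P ^ k) j i - (n : ℝ)⁻¹|)
      _ ≤ n * ((sigma2 P ^ 2) ^ k * 1) := by
          gcongr
          exact (pow_mulVec_dotProduct_le hrow hcol hσ k hw1).trans
            (mul_le_mul_of_nonneg_left hww (by positivity))
      _ = (Real.sqrt n * sigma2 P ^ k) ^ 2 := by
          rw [mul_pow, Real.sq_sqrt n.cast_nonneg, mul_one, ← pow_mul, ← pow_mul, mul_comm 2]
  exact (pow_le_pow_iff_left₀ (Finset.sum_nonneg fun _ _ => abs_nonneg _)
    (mul_nonneg (Real.sqrt_nonneg _) (pow_nonneg (sigma2_nonneg P) _)) two_ne_zero).mp hsq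

end SecondSingularValue

theorem norm_sum_smul_le {ι E : Type*} [Fintype ι] [SeminormedAddCommGroup E] [NormedSpace ℝ E]
    (a : ι → ℝ) {x : ι → E} {C : ℝ} (hx : ∀ j, ‖x j‖ ≤ C) :
    ‖∑ j, a j • x j‖ ≤ (∑ j, |a j|) * C := by
  rw [Finset.sum_mul]
  refine norm_sum_le_of_le _ fun j _ => ?_
  rw [norm_smul, Real.norm_eq_abs]
  exact mul_le_mul_of_nonneg_left (hx j) (abs_nonneg _)

section Consensus

variable {ι E : Type*} [Fintype ι] [AddCommGroup E] [Module ℝ E]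

theorem Matrix.sum_smul_sum_smul (A B : Matrix ι ι ℝ) (x : ι → E) (i : ι) :
    ∑ j, A j i • ∑ l, B l j • x l = ∑ l, (B * A) l i • x l := by
  simp only [Finset.smul_sum, smul_smul, mul_apply, Finset.sum_smul]
  rw [Finset.sum_comm]
  simp only [mul_comm]

variable [DecidableEq ι] {P : Matrix ι ι ℝ} {u z : ι → ℕ → E} (hz1 : ∀ i, z i 1 = 0)
  (hrec : ∀ i t, 1 ≤ t → z i (t + 1) = (∑ j, P j i • z j t) + u i t)

include hz1 hrec

theorem eq_sum_pow_smul_of_rec (m : ℕ) (i : ι) :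
    z i (m + 1) = ∑ k ∈ Finset.range m, ∑ j, (P ^ k) j i • u j (m - k) := by
  induction m generalizing i with
  | zero => simp [hz1]
  | succ m ih =>
    rw [hrec i (m + 1) (by omega), Finset.sum_range_succ']
    congr 1
    · calc ∑ j, P j i • z j (m + 1)
          = ∑ k ∈ Finset.range m, ∑ j, P j i • ∑ l, (P ^ k) l j • u l (m - k) := by
            simp only [ih, Finset.smul_sum (s := Finset.range m)]
            exact Finset.sum_comm
        _ = _ := Finset.sum_congr rfl fun k _ => by
            rw [Matrix.sum_smul_sum_smul, ← pow_succ, Nat.add_sub_add_right]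
    · simp [one_apply]

theorem smul_sum_sub_eq_sum_pow_smul (hrow : ∀ i, ∑ j, P i j = 1) (c : ℝ) (m : ℕ) (i : ι) :
    c • (∑ q, z q (m + 1)) - z i (m + 1) =
      ∑ k ∈ Finset.range m, ∑ j, (c - (P ^ k) j i) • u j (m - k) := by
  have hrowk : ∀ k j, ∑ q, (P ^ k) j q = 1 := fun k j => by
    simpa [mulVec, dotProduct] using congrFun (pow_mulVec_one_of_sum_row hrow k) j
  have hsum : ∑ q, z q (m + 1) = ∑ k ∈ Finset.range m, ∑ j, u j (m - k) := by
    simp only [eq_sum_pow_smul_of_rec hz1 hrec m]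
    rw [Finset.sum_comm]
    refine Finset.sum_congr rfl fun k _ => ?_
    rw [Finset.sum_comm]
    simp only [← Finset.sum_smul, hrowk, one_smul]
  rw [hsum, eq_sum_pow_smul_of_rec hz1 hrec m i]
  simp only [Finset.smul_sum, ← Finset.sum_sub_distrib, sub_smul]

end Consensus

theorem stmt_6_general {n d : ℕ} (P : Matrix (Fin n) (Fin n) ℝ)
    (hrow : ∀ i, ∑ j, P i j = 1)
    (hcol : ∀ j, ∑ i, P i j = 1)
    (hσ : sigma2 P < 1)
    (C : ℝ) (u z : Fin n → ℕ → EuclideanSpace ℝ (Fin d))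
    (hu : ∀ i : Fin n, ∀ t : ℕ, 1 ≤ t → ‖u i t‖ ≤ C)
    (hz1 : ∀ i, z i 1 = 0)
    (hrec : ∀ i : Fin n, ∀ t : ℕ, 1 ≤ t →
      z i (t + 1) = (∑ j, P j i • z j t) + u i t)
    (i : Fin n) (t : ℕ) (ht : 1 ≤ t) :
    ‖(n : ℝ)⁻¹ • (∑ j, z j t) - z i t‖ ≤ Real.sqrt n * C / (1 - sigma2 P) := by
  have : NeZero n := NeZero.of_pos i.pos
  obtain ⟨m, rfl⟩ := Nat.exists_eq_add_of_le' ht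
  have hC : 0 ≤ C := (norm_nonneg _).trans (hu i 1 le_rfl)
  rw [smul_sum_sub_eq_sum_pow_smul hz1 hrec hrow]
  calc ‖∑ k ∈ Finset.range m, ∑ j, ((n : ℝ)⁻¹ - (P ^ k) j i) • u j (m - k)‖
      ≤ ∑ k ∈ Finset.range m, Real.sqrt n * sigma2 P ^ k * C := by
        refine norm_sum_le_of_le _ fun k hk => ?_
        refine (norm_sum_smul_le _ fun j => hu j _ ?_).trans (mul_le_mul_of_nonneg_right ?_ hC)
        · have := Finset.mem_range.mp hk
          omega
        · simpa only [abs_sub_comm] using sum_abs_pow_apply_sub_inv_le hrow hcol hσ i k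
    _ = Real.sqrt n * C * ∑ k ∈ Finset.Ico 0 m, sigma2 P ^ k := by
        rw [Finset.mul_sum, Finset.range_eq_Ico]
        exact Finset.sum_congr rfl fun k _ => by ring
    _ ≤ Real.sqrt n * C * (sigma2 P ^ 0 / (1 - sigma2 P)) := by
        gcongr
        exact geom_sum_Ico_le_of_lt_one (sigma2_nonneg P) hσ
    _ = Real.sqrt n * C / (1 - sigma2 P) := by ring

/-- for a doubly stochastic `P` with `σ₂(P) < 1` and uniformly bounded
perturbations `‖u_{i,t}‖ ≤ C`, the consensus iterates `z_{i,t+1} = Σ_j P_{ji} z_{j,t} + u_{i,t}`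
(with `z_{i,1} = 0`) satisfy `‖z̄_t - z_{i,t}‖ ≤ √n C / (1 - σ₂(P))`. -/
theorem stmt_6 {n d : ℕ} (P : Matrix (Fin n) (Fin n) ℝ)
    (hnonneg : ∀ i j, 0 ≤ P i j)
    (hrow : ∀ i, ∑ j, P i j = 1)
    (hcol : ∀ j, ∑ i, P i j = 1)
    (hσ : sigma2 P < 1)
    (C : ℝ) (u z : Fin n → ℕ → EuclideanSpace ℝ (Fin d))
    (hu : ∀ i : Fin n, ∀ t : ℕ, 1 ≤ t → ‖u i t‖ ≤ C)
    (hz1 : ∀ i, z i 1 = 0)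
    (hrec : ∀ i : Fin n, ∀ t : ℕ, 1 ≤ t →
      z i (t + 1) = (∑ j, P j i • z j t) + u i t)
    (i : Fin n) (t : ℕ) (ht : 1 ≤ t) :
    ‖(n : ℝ)⁻¹ • (∑ j, z j t) - z i t‖ ≤ Real.sqrt n * C / (1 - sigma2 P) :=
  stmt_6_general P hrow hcol hσ C u z hu hz1 hrec i t ht
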